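/- Let 𝒯 be a supercritical CA, let u be a unit vector, and let x_u ∈ ℓ_u ∩ 𝒩 be a point such that every line ℓ obtained from ℓ_u by a rotation about x_u through a nonzero angle of absolute value less than some α > 0 satisfies π_d(ℒ°(ℓ)) = 0. Then there is β > 0 such that for every unit vector v with ‖v − u‖ < β, the concave wedge Q = H_u⁻ ∪ H_v⁻ satisfies 𝒯̄(Q) ⊆ −x_u + Q. If moreover there exist δ > 0 and a line ℓ₀ such that (frontier of K_{1/w}) ∩ B(u/w(u), δ) = ℓ₀ ∩ B(u/w(u), δ) (i.e., the boundary of K_{1/w} is locally a line at u/w(u)) and x_u is the unique point with the above rotation property, then Q is invariant: 𝒯̄(Q) = −x_u + Q for v close enough to u. -/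

import Mathlib

open MeasureTheory ProbabilityTheory Filter Topology Set
open scoped Pointwise ENNReal

noncomputable section

abbrev Pt : Type := EuclideanSpace ℝ (Fin 2)

def mkPt (a b : ℝ) : Pt := (WithLp.equiv 2 (Fin 2 → ℝ)).symm ![a, b]

def toPt (z : ℤ × ℤ) : Pt := mkPt z.1 z.2

def lattice : Set Pt := Set.range toPt

structure CA where
  N : Set Pt
  finite : N.Finite
  subLat : N ⊆ lattice
  zeroMem : (0 : Pt) ∈ N
  negN : -N = N
  rule : Set Pt → Prop
  mono : ∀ ⦃S₁ S₂ : Set Pt⦄, S₁ ⊆ S₂ → rule S₁ → rule S₂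
  notEmpty : ¬ rule ∅
  ruleSymm : ∀ S : Set Pt, rule (-S) ↔ rule S
  solid : ∀ S : Set Pt, (0 : Pt) ∈ S → rule S

def CA.T (c : CA) (A : Set Pt) : Set Pt :=
  {x | x ∈ lattice ∧ c.rule (((fun a => a - x) '' A) ∩ c.N)}

def CA.Tbar (c : CA) (B : Set Pt) : Set Pt :=
  {x | c.rule ((((fun a => a - x) '' B) ∩ lattice) ∩ c.N)}

def Hminus (u : Pt) : Set Pt := {x | (inner ℝ x u : ℝ) ≤ 0}

def shiftSet (v : Pt) (S : Set Pt) : Set Pt := (fun x => x + v) '' S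

def IsSpeed (c : CA) (w : Pt → ℝ) : Prop :=
  ∀ u : Pt, ‖u‖ = 1 → c.Tbar (Hminus u) = shiftSet (w u • u) (Hminus u)

def Supercritical (w : Pt → ℝ) : Prop := ∀ u : Pt, ‖u‖ = 1 → 0 < w u

def FillsSpace (c : CA) (A : Set Pt) : Prop :=
  A ⊆ lattice ∧ ∀ x ∈ lattice, ∃ t : ℕ, x ∈ c.T^[t] A

def LocallyRegular (c : CA) : Prop :=
  ∀ A₀ : Set Pt, A₀.Finite → A₀ ⊆ lattice → ∃ C : ℝ, 0 < C ∧
    ∀ A : ℕ → Set Pt, A 0 = A₀ →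
      (∀ s, A s ⊆ A (s + 1)) → (∀ s, A (s + 1) ⊆ A s ∪ c.T (A s)) →
      ∀ t : ℕ, ∀ x ∈ A t, (∀ y ∈ A₀, C ≤ dist x y) →
        ∃ G : Set Pt, G.Finite ∧ G ⊆ A t ∧ G ⊆ Metric.closedBall x C ∧ FillsSpace c G

structure Perturbation (c : CA) where
  pr : Set Pt → ℝ
  nonneg : ∀ S, 0 ≤ pr S
  le_one : ∀ S, pr S ≤ 1
  mono : ∀ ⦃S₁ S₂ : Set Pt⦄, S₁ ⊆ S₂ → pr S₁ ≤ pr S₂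
  empty : pr ∅ = 0
  prSymm : ∀ S, pr (-S) = pr S
  solid : ∀ S : Set Pt, (0 : Pt) ∈ S → pr S = 1
  p : ℝ
  p_pos : 0 < p
  p_min : ∀ S : Set Pt, S ⊆ c.N → 0 < pr S → p ≤ pr S
  p_attained : ∃ S : Set Pt, S ⊆ c.N ∧ pr S = p
  compat : ∀ S : Set Pt, S ⊆ c.N → (c.rule S ↔ 0 < pr S)

def IsUniformIID {Ω : Type*} [MeasureSpace Ω] (U : ((ℤ × ℤ) × ℕ) → Ω → ℝ) : Prop :=
  (∀ i, Measurable (U i)) ∧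
  iIndepFun U ℙ ∧
  ∀ i, Measure.map (U i) ℙ = volume.restrict (Set.Icc (0 : ℝ) 1)

def IsDyn {Ω : Type*} (c : CA) (P : Perturbation c) (U : ((ℤ × ℤ) × ℕ) → Ω → ℝ)
    (A : ℕ → Ω → Set Pt) : Prop :=
  ∀ ω t, A (t + 1) ω =
    {x | ∃ z : ℤ × ℤ, toPt z = x ∧
      U (z, t) ω ≤ P.pr (((fun a => a - x) '' A t ω) ∩ c.N)}

def IsStdDyn {Ω : Type*} (c : CA) (p : ℝ) (U : ((ℤ × ℤ) × ℕ) → Ω → ℝ)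
    (A : ℕ → Ω → Set Pt) : Prop :=
  ∀ ω t, A (t + 1) ω =
    A t ω ∪ {x | x ∈ c.T (A t ω) ∧ ∃ z : ℤ × ℤ, toPt z = x ∧ U (z, t) ω ≤ p}

def SpeedEvent (u : Pt) (wu ε : ℝ) (t : ℕ) (At : Set Pt) : Prop :=
  shiftSet (((t : ℝ) * (wu - ε)) • u) (Hminus u) ∩ lattice ∩
      Metric.closedBall 0 ((t : ℝ) ^ 2) ⊆ At ∧
  At ∩ Metric.closedBall 0 ((t : ℝ) ^ 2) ⊆
      shiftSet (((t : ℝ) * (wu + ε)) • u) (Hminus u)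

def Lset (w : Pt → ℝ) : Set Pt := {x | ∀ u : Pt, ‖u‖ = 1 → (inner ℝ x u : ℝ) ≤ w u}

def Kset (w : Pt → ℝ) : Set Pt :=
  {x | ∃ u : Pt, ‖u‖ = 1 ∧ ∃ r : ℝ, 0 ≤ r ∧ r ≤ (w u)⁻¹ ∧ x = r • u}

def dKp (w : Pt → ℝ) : Set Pt :=
  frontier (Kset w) ∩ frontier (convexHull ℝ (Kset w))

def lineu (w : Pt → ℝ) (u : Pt) : Set Pt := {x | (inner ℝ x u : ℝ) = -(w u)}

def rot (β : ℝ) (v : Pt) : Pt :=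
  mkPt (Real.cos β * v 0 - Real.sin β * v 1) (Real.sin β * v 0 + Real.cos β * v 1)

def lineSet (q n : Pt) : Set Pt := {x | (inner ℝ (x - q) n : ℝ) = 0}

def farOpen (Nset : Set Pt) (q n : Pt) : Set Pt :=
  {x ∈ Nset | 0 < (inner ℝ (x - q) n : ℝ) * (inner ℝ q n : ℝ)}

def farClosed (Nset : Set Pt) (q n : Pt) : Set Pt :=
  {x ∈ Nset | 0 ≤ (inner ℝ (x - q) n : ℝ) * (inner ℝ q n : ℝ)}

def HasLDSpeed (c : CA) (P : Perturbation c) (wpi : Pt → ℝ) : Prop :=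
  ∀ u : Pt, ‖u‖ = 1 → 0 < wpi u ∧
    ∀ (Ω : Type) [MeasureSpace Ω] [IsProbabilityMeasure (ℙ : Measure Ω)]
      (U : ((ℤ × ℤ) × ℕ) → Ω → ℝ), IsUniformIID U →
      ∀ A : ℕ → Ω → Set Pt, IsDyn c P U A → A 0 = (fun _ => Hminus u ∩ lattice) →
      ∀ ε : ℝ, 0 < ε → ∃ cε : ℝ, 0 < cε ∧ ∀ t : ℕ, 1 ≤ t →
        ENNReal.ofReal (1 - Real.exp (-cε * t)) ≤ ℙ {ω | SpeedEvent u (wpi u) ε t (A t ω)}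

def ext (M : ℤ) (κ : ℝ) (A : Set (ℤ × ℤ)) : Set (ℤ × ℤ) :=
  {q | (0 ≤ q.1 ∧ q.1 ≤ M - 1 ∧ q ∈ A) ∨
       (M ≤ q.1 ∧ q.1 ≤ 2 * M - 1 ∧ (q.1 - M, ⌊(q.2 : ℝ) - κ * M⌋) ∈ A) ∨
       (-M ≤ q.1 ∧ q.1 < 0 ∧ (q.1 + M, ⌊(q.2 : ℝ) + κ * M⌋) ∈ A)}

def IsStripDyn {Ω : Type*} (c : CA) (P : Perturbation c) (M : ℤ) (κ : ℝ)
    (U : ((ℤ × ℤ) × ℕ) → Ω → ℝ) (A : ℕ → Ω → Set (ℤ × ℤ)) : Prop :=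
  ∀ ω t, A (t + 1) ω =
    {q | 0 ≤ q.1 ∧ q.1 ≤ M - 1 ∧
      U (q, t) ω ≤ P.pr ((toPt '' ((fun r => r - q) '' ext M κ (A t ω))) ∩ c.N)}

def hgt1 (A : Set (ℤ × ℤ)) (M : ℤ) (κ : ℝ) : ℝ :=
  sSup {r : ℝ | ∃ q ∈ A, 0 ≤ q.1 ∧ q.1 ≤ M - 1 ∧ r = κ * q.1 + q.2}

def hgt0 (A : Set (ℤ × ℤ)) (M : ℤ) (κ : ℝ) : ℝ :=
  sInf {r : ℝ | ∃ q : ℤ × ℤ, q ∉ A ∧ 0 ≤ q.1 ∧ q.1 ≤ M - 1 ∧ r = κ * q.1 + q.2}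

def boxN (ρ : ℕ) : Finset (ℤ × ℤ) := Finset.Icc (-(ρ : ℤ), -(ρ : ℤ)) ((ρ : ℤ), (ρ : ℤ))

def cutCard (ρ : ℕ) (a b cc : ℝ) : ℕ :=
  ((boxN ρ).filter (fun y => cc ≤ a * y.1 + b * y.2)).card

def lamSet (ρ : ℕ) (x : ℤ × ℤ) : Set ℕ :=
  {n | ∃ a b cc : ℝ, ¬(a = 0 ∧ b = 0) ∧ 0 < cc ∧ a * x.1 + b * x.2 = cc ∧ n = cutCard ρ a b cc}

def lamStar (ρ : ℕ) (x : ℤ × ℤ) : ℕ := sInf (lamSet ρ x)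

open scoped Classical in
def IsSlowSurface {Ω : Type*} (b : ℤ × ℕ → Ω → Bool) (η : ℕ → Ω → ℤ → ℕ) : Prop :=
  (∀ ω x, η 0 ω x = 0) ∧
  ∀ ω t x, η (t + 1) ω x =
    if b (x, t) ω = true ∧ ∀ y : ℤ, |y - x| ≤ 1 → η t ω x ≤ η t ω y
    then η t ω x + 1 else η t ω x

open scoped Classical in
def IsFastSurface {Ω : Type*} (b : ℤ × ℕ → Ω → Bool) (η : ℕ → Ω → ℤ → ℕ) : Prop :=
  (∀ ω x, η 0 ω x = 0) ∧
  ∀ ω t x, η (t + 1) ω x =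
    if b (x, t) ω = true ∨ ∃ y : ℤ, |y - x| ≤ 1 ∧ η t ω x < η t ω y
    then η t ω x + 1 else η t ω x

def AdmissibleField {Ω : Type*} [MeasureSpace Ω] (p' : ℝ) (r : ℕ)
    (b : ℤ × ℕ → Ω → Bool) : Prop :=
  (∀ i, Measurable (b i)) ∧
  (∀ i, ℙ {ω | b i ω = true} = ENNReal.ofReal p') ∧
  ∀ I : Finset (ℤ × ℕ),
    (∀ i ∈ I, ∀ j ∈ I, i ≠ j → i.2 ≠ j.2 ∨ (r : ℤ) < |i.1 - j.1|) →
    iIndepFun (fun i : I => b i.1) ℙ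



/-!
For `v` near `u`, `v ≠ u`, write `v = rot β u` with `0 < |β| < α`. If `x ∈ 𝒯̄(Q)` but
`x + x_u ∉ Q`, every site `y ∈ 𝒩` with `y + x ∈ Q` satisfies `⟪y - x_u, v⟫ < 0` (for sites seen
through `H_u⁻` because `𝒩` is finite and `v` is close to `u`); these sites lie beyond the rotated
line through `x_u`, so they cannot trigger the rule.

For invariance, local flatness of `∂K_{1/w}` at `u / w(u)` and continuity of `w` give a single `q`
with `w(v) = -⟪q, v⟫` for all `v` near `u`: all lines `ℓ_v` pass through `q`. Each `ℓ_v` meets `𝒩`,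
and a site other than `q` lies on at most one of them, so `q ∈ 𝒩`. Then `q` has the rotation
property, hence `q = x_u`, and `𝒯̄(Q) ⊇ 𝒯̄(H_u⁻) ∪ 𝒯̄(H_v⁻) = -x_u + Q`.
-/

open Real
open scoped RealInnerProductSpace

lemma Pt.ext_coords {x y : Pt} (h0 : x 0 = y 0) (h1 : x 1 = y 1) : x = y := by
  apply WithLp.ofLp_injective 2
  funext i
  fin_cases i <;> assumption

lemma Pt.inner_eq (x y : Pt) : ⟪x, y⟫ = x 0 * y 0 + x 1 * y 1 := by
  simp [PiLp.inner_apply, Fin.sum_univ_two, mul_comm]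

lemma Pt.norm_sq_eq (x : Pt) : ‖x‖ ^ 2 = x 0 ^ 2 + x 1 ^ 2 := by
  rw [← real_inner_self_eq_norm_sq, Pt.inner_eq]
  ring

lemma mem_image_sub_const_iff {B : Set Pt} {x y : Pt} : y ∈ (fun a => a - x) '' B ↔ y + x ∈ B :=
  ⟨by rintro ⟨a, ha, rfl⟩; simpa using ha, fun h => ⟨y + x, h, add_sub_cancel_right y x⟩⟩

lemma mem_shiftSet_iff {v x : Pt} {S : Set Pt} : x ∈ shiftSet v S ↔ x - v ∈ S := by
  simp [shiftSet, Set.image_add_right, sub_eq_add_neg]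

section Rotation

@[simp] lemma rot_apply_zero (β : ℝ) (v : Pt) : rot β v 0 = cos β * v 0 - sin β * v 1 := rfl

@[simp] lemma rot_apply_one (β : ℝ) (v : Pt) : rot β v 1 = sin β * v 0 + cos β * v 1 := rfl

lemma rot_zero (v : Pt) : rot 0 v = v := Pt.ext_coords (by simp) (by simp)

lemma norm_rot (β : ℝ) (v : Pt) : ‖rot β v‖ = ‖v‖ := by
  rw [← sq_eq_sq₀ (norm_nonneg _) (norm_nonneg _), Pt.norm_sq_eq, Pt.norm_sq_eq, rot_apply_zero,
    rot_apply_one]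
  linear_combination (v 0 ^ 2 + v 1 ^ 2) * sin_sq_add_cos_sq β

lemma continuous_rot (v : Pt) : Continuous fun β => rot β v :=
  (PiLp.continuous_toLp 2 _).comp (continuous_pi fun i => by fin_cases i <;> simp <;> fun_prop)

lemma tendsto_rot_nhds_zero {u : Pt} (hu : ‖u‖ = 1) :
    Tendsto (fun β => rot β u) (𝓝 0) (𝓝[Metric.sphere 0 1] u) :=
  tendsto_nhdsWithin_iff.2 ⟨by simpa only [rot_zero] using (continuous_rot u).tendsto 0,
    .of_forall fun β => by simp [norm_rot, hu]⟩

def cross (x y : Pt) : ℝ := x 0 * y 1 - x 1 * y 0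

lemma inner_sq_add_cross_sq (x y : Pt) : ⟪x, y⟫ ^ 2 + cross x y ^ 2 = ‖x‖ ^ 2 * ‖y‖ ^ 2 := by
  rw [Pt.inner_eq, Pt.norm_sq_eq, Pt.norm_sq_eq, cross]
  ring

lemma cross_rot_rot (s t : ℝ) (v : Pt) : cross (rot s v) (rot t v) = sin (t - s) * ‖v‖ ^ 2 := by
  rw [cross, Pt.norm_sq_eq, sin_sub]
  simp only [rot_apply_zero, rot_apply_one]
  ring

lemma eq_zero_of_inner_eq_zero_of_cross_ne_zero {a b z : Pt} (hab : cross a b ≠ 0)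
    (ha : ⟪z, a⟫ = 0) (hb : ⟪z, b⟫ = 0) : z = 0 := by
  rw [Pt.inner_eq] at ha hb
  have h0 : z 0 * cross a b = 0 := by rw [cross]; linear_combination b 1 * ha - a 1 * hb
  have h1 : z 1 * cross a b = 0 := by rw [cross]; linear_combination a 0 * hb - b 0 * ha
  exact Pt.ext_coords ((mul_eq_zero.1 h0).resolve_right hab) ((mul_eq_zero.1 h1).resolve_right hab)

lemma exists_rot_eq {u v : Pt} (hu : ‖u‖ = 1) (hv : ‖v‖ = 1) :
    ∃ β : ℝ, |β| = arccos ⟪u, v⟫ ∧ rot β u = v := by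
  set p := ⟪u, v⟫
  set q := cross u v
  have hpq : p ^ 2 + q ^ 2 = 1 := by simp [p, q, inner_sq_add_cross_sq, hu, hv]
  have hp : -1 ≤ p ∧ p ≤ 1 := ⟨by nlinarith, by nlinarith⟩
  have hsin : sin (arccos p) = |q| := by
    rw [sin_arccos, ← sqrt_sq_eq_abs]
    congr 1
    linarith
  have hu2 : u 0 ^ 2 + u 1 ^ 2 = 1 := by rw [← Pt.norm_sq_eq, hu, one_pow]
  -- `p • u + q • u⊥ = v`, so any angle with cosine `p` and sine `q` works
  have key : ∀ β, cos β = p → sin β = q → rot β u = v := by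
    intro β hc hs
    refine Pt.ext_coords ?_ ?_ <;> simp only [rot_apply_zero, rot_apply_one, hc, hs, p, q,
      Pt.inner_eq, cross]
    · linear_combination v 0 * hu2
    · linear_combination v 1 * hu2
  rcases le_or_gt 0 q with hq | hq
  · exact ⟨arccos p, abs_of_nonneg (arccos_nonneg p),
      key _ (cos_arccos hp.1 hp.2) (by rw [hsin, abs_of_nonneg hq])⟩
  · exact ⟨-arccos p, by rw [abs_neg, abs_of_nonneg (arccos_nonneg p)],
      key _ (by rw [cos_neg, cos_arccos hp.1 hp.2]) (by rw [sin_neg, hsin, abs_of_neg hq, neg_neg])⟩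

lemma eventually_exists_rot_eq {u : Pt} (hu : ‖u‖ = 1) {α : ℝ} (hα : 0 < α) :
    ∀ᶠ v in 𝓝[Metric.sphere 0 1] u, ∃ β, |β| < α ∧ rot β u = v := by
  have hcont : ContinuousAt (fun v => arccos ⟪u, v⟫) u :=
    (continuous_arccos.comp (continuous_const.inner continuous_id)).continuousAt
  have hsmall : ∀ᶠ v in 𝓝 u, arccos ⟪u, v⟫ < α :=
    hcont.eventually_lt continuousAt_const (by simpa [real_inner_self_eq_norm_sq, hu] using hα)
  filter_upwards [nhdsWithin_le_nhds hsmall, self_mem_nhdsWithin] with v hvα hv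
  obtain ⟨β, hβ, rfl⟩ := exists_rot_eq hu (by simpa using hv)
  exact ⟨β, hβ ▸ hvα, rfl⟩

lemma zero_mem_of_eventually_exists_inner_eq_zero {u : Pt} (hu : ‖u‖ = 1) {S : Set Pt}
    (hS : S.Finite) (h : ∀ᶠ v in 𝓝[Metric.sphere 0 1] u, ∃ y ∈ S, ⟪y, v⟫ = 0) :
    (0 : Pt) ∈ S := by
  obtain ⟨ε, hε, hεS⟩ := Metric.eventually_nhds_iff.1 ((tendsto_rot_nhds_zero hu).eventually h)
  by_contra h0
  set I := Ioo 0 (min ε 1)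
  -- two distinct directions `rot s u`, `rot t u` with `0 < s, t < 1` are linearly independent
  have hsub : ∀ y ∈ S, {t ∈ I | ⟪y, rot t u⟫ = 0}.Subsingleton := by
    rintro y hy s ⟨hs, hsy⟩ t ⟨ht, hty⟩
    by_contra hst
    have hI : ∀ r ∈ I, 0 < r ∧ r < 1 := fun r hr => ⟨hr.1, hr.2.trans_le (min_le_right _ _)⟩
    have hsin : sin (t - s) ≠ 0 := by
      rw [Ne, sin_eq_zero_iff_of_lt_of_lt (by linarith [hI s hs, hI t ht, pi_gt_three])
        (by linarith [hI s hs, hI t ht, pi_gt_three]), sub_eq_zero]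
      exact Ne.symm hst
    have hcross : cross (rot s u) (rot t u) ≠ 0 := by simpa [cross_rot_rot, hu] using hsin
    exact h0 (eq_zero_of_inner_eq_zero_of_cross_ne_zero hcross hsy hty ▸ hy)
  have hcover : I ⊆ ⋃ y ∈ S, {t ∈ I | ⟪y, rot t u⟫ = 0} := by
    intro t ht
    have ht' : dist t 0 < ε := by
      rw [dist_zero_right, norm_eq_abs, abs_of_pos ht.1]
      exact ht.2.trans_le (min_le_left _ _)
    obtain ⟨y, hy, hyt⟩ := hεS ht'
    exact mem_biUnion hy ⟨ht, hyt⟩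
  exact Ioo_infinite (lt_min hε one_pos)
    ((hS.biUnion fun y hy => (hsub y hy).finite).subset hcover)

end Rotation

section Speed

variable {c : CA} {w : Pt → ℝ}

lemma CA.mem_Tbar_iff (c : CA) {B : Set Pt} {x : Pt} :
    x ∈ c.Tbar B ↔ c.rule {y ∈ c.N | y + x ∈ B} := by
  have hS : ((fun a => a - x) '' B ∩ lattice) ∩ c.N = {y ∈ c.N | y + x ∈ B} := by
    ext y
    simp only [mem_inter_iff, mem_ofPred_eq, mem_image_sub_const_iff]
    exact ⟨fun h => ⟨h.2, h.1.1⟩, fun h => ⟨⟨h.2, c.subLat h.1⟩, h.1⟩⟩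
  rw [CA.Tbar, mem_ofPred_eq, hS]

lemma CA.Tbar_mono (c : CA) {B B' : Set Pt} (h : B ⊆ B') : c.Tbar B ⊆ c.Tbar B' :=
  fun _ hx => c.mono (fun _ hy => ⟨⟨image_mono h hy.1.1, hy.1.2⟩, hy.2⟩) hx

lemma IsSpeed.rule_iff (hw : IsSpeed c w) {v : Pt} (hv : ‖v‖ = 1) (t : ℝ) :
    c.rule {y ∈ c.N | ⟪y, v⟫ ≤ -t} ↔ t ≤ w v := by
  have h := Set.ext_iff.1 (hw v hv) (t • v)
  simpa only [c.mem_Tbar_iff, mem_shiftSet_iff, Hminus, mem_ofPred_eq, inner_add_left,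
    inner_sub_left, real_inner_smul_left, real_inner_self_eq_norm_sq, hv, one_pow, mul_one,
    sub_nonpos, ← le_neg_iff_add_nonpos_right] using h

lemma IsSpeed.not_rule_of_forall_inner_lt (hw : IsSpeed c w) {v : Pt} (hv : ‖v‖ = 1)
    {S : Set Pt} (hS : S ⊆ c.N) (h : ∀ y ∈ S, ⟪y, v⟫ < -w v) : ¬ c.rule S := by
  intro hrule
  have hne : S.Nonempty := nonempty_iff_ne_empty.2 (by rintro rfl; exact c.notEmpty hrule)
  obtain ⟨y₀, hy₀, hmax⟩ := S.exists_max_image (⟪·, v⟫) (c.finite.subset hS) hne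
  have hsub : S ⊆ {y ∈ c.N | ⟪y, v⟫ ≤ -(-⟪y₀, v⟫)} :=
    fun y hy => ⟨hS hy, by simpa using hmax y hy⟩
  linarith [h y₀ hy₀, (hw.rule_iff hv _).1 (c.mono hsub hrule)]

lemma IsSpeed.exists_mem_inner_eq (hw : IsSpeed c w) {v : Pt} (hv : ‖v‖ = 1) :
    ∃ y ∈ c.N, ⟪y, v⟫ = -w v := by
  by_contra! h
  exact hw.not_rule_of_forall_inner_lt hv (sep_subset _ _)
    (fun y hy => lt_of_le_of_ne hy.2 (h y hy.1)) ((hw.rule_iff hv _).2 le_rfl)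

lemma IsSpeed.not_rule_farOpen (hw : IsSpeed c w) {v q : Pt} (hv : ‖v‖ = 1)
    (hq : ⟪q, v⟫ = -w v) (hwv : 0 < w v) : ¬ c.rule (farOpen c.N q v) :=
  hw.not_rule_of_forall_inner_lt hv (sep_subset _ _) fun y hy => by
    have hpos := hy.2
    rw [inner_sub_left, hq] at hpos
    nlinarith

lemma IsSpeed.Tbar_Hminus_eq (hw : IsSpeed c w) {v q : Pt} (hv : ‖v‖ = 1)
    (hq : ⟪q, v⟫ = -w v) : c.Tbar (Hminus v) = (fun x => x - q) '' Hminus v := by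
  rw [hw v hv]
  ext x
  simp only [mem_shiftSet_iff, mem_image_sub_const_iff, Hminus, mem_ofPred_eq,
    inner_sub_left, inner_add_left, real_inner_smul_left, real_inner_self_eq_norm_sq, hv, hq]
  constructor <;> intro <;> linarith

lemma IsSpeed.le_add_mul_norm_sub (hw : IsSpeed c w) {R : ℝ} (hR : ∀ y ∈ c.N, ‖y‖ ≤ R)
    {u v : Pt} (hu : ‖u‖ = 1) (hv : ‖v‖ = 1) : w u ≤ w v + R * ‖v - u‖ := by
  suffices c.rule {y ∈ c.N | ⟪y, v⟫ ≤ -(w u - R * ‖v - u‖)} by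
    linarith [(hw.rule_iff hv _).1 this]
  refine c.mono (fun y hy => ⟨hy.1, ?_⟩) ((hw.rule_iff hu (w u)).2 le_rfl)
  have hcs : ⟪y, v - u⟫ ≤ ‖y‖ * ‖v - u‖ := real_inner_le_norm _ _
  have hR' : ‖y‖ * ‖v - u‖ ≤ R * ‖v - u‖ := by gcongr; exact hR y hy.1
  rw [inner_sub_right] at hcs
  linarith [hy.2]

lemma IsSpeed.continuousOn (hw : IsSpeed c w) : ContinuousOn w (Metric.sphere 0 1) := by
  obtain ⟨R, hR⟩ := c.finite.isBounded.exists_norm_le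
  have hR' : ∀ y ∈ c.N, ‖y‖ ≤ R.toNNReal := fun y hy => (hR y hy).trans (Real.le_coe_toNNReal R)
  refine (LipschitzOnWith.of_dist_le_mul (K := R.toNNReal) fun u hu v hv => ?_).continuousOn
  rw [mem_sphere_zero_iff_norm] at hu hv
  have h₁ := hw.le_add_mul_norm_sub hR' hu hv
  have h₂ := hw.le_add_mul_norm_sub hR' hv hu
  rw [norm_sub_rev] at h₁
  rw [Real.dist_eq, dist_eq_norm, abs_sub_le_iff]
  constructor <;> linarith

end Speed

section Wedge

variable {c : CA} {w : Pt → ℝ}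

lemma CA.Tbar_union_subset_of_not_rule_farOpen (c : CA) {u v q : Pt}
    (hN : ∀ y ∈ c.N, ⟪y - q, u⟫ < 0 → ⟪y - q, v⟫ < 0) (hqv : ⟪q, v⟫ < 0)
    (hfar : ¬ c.rule (farOpen c.N q v)) :
    c.Tbar (Hminus u ∪ Hminus v) ⊆ (fun x => x - q) '' (Hminus u ∪ Hminus v) := by
  intro x hx
  by_contra hxq
  simp only [mem_image_sub_const_iff, mem_union, Hminus, mem_ofPred_eq, not_or, not_le,
    inner_add_left] at hxq
  refine hfar (c.mono (fun y hy => ⟨hy.1, mul_pos_of_neg_of_neg ?_ hqv⟩) (c.mem_Tbar_iff.1 hx))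
  obtain ⟨hyN, hy⟩ := hy
  simp only [Hminus, mem_union, mem_ofPred_eq, inner_add_left] at hy
  rcases hy with hy | hy
  · exact hN y hyN (by rw [inner_sub_left]; linarith)
  · rw [inner_sub_left]; linarith

lemma eventually_Tbar_union_subset (hw : IsSpeed c w) (hsc : Supercritical w) {u q : Pt}
    (hu : ‖u‖ = 1) (hq : ⟪q, u⟫ = -w u) {α : ℝ} (hα : 0 < α)
    (hrot : ∀ β : ℝ, β ≠ 0 → |β| < α → ¬ c.rule (farOpen c.N q (rot β u))) :
    ∀ᶠ v in 𝓝[Metric.sphere 0 1] u,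
      c.Tbar (Hminus u ∪ Hminus v) ⊆ (fun x => x - q) '' (Hminus u ∪ Hminus v) := by
  have hcont : ∀ z : Pt, ContinuousAt (fun v => ⟪z, v⟫) u :=
    fun z => (continuous_const.inner continuous_id).continuousAt
  have hN : ∀ᶠ v in 𝓝 u, ∀ y ∈ c.N, ⟪y - q, u⟫ < 0 → ⟪y - q, v⟫ < 0 := by
    refine c.finite.eventually_all.2 fun y _ => ?_
    by_cases hy : ⟪y - q, u⟫ < 0
    · exact ((hcont _).eventually_lt continuousAt_const hy).mono fun _ hv _ => hv
    · exact .of_forall fun _ h => absurd h hy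
  have hqv : ∀ᶠ v in 𝓝 u, ⟪q, v⟫ < 0 :=
    (hcont q).eventually_lt continuousAt_const (by linarith [hsc u hu])
  filter_upwards [nhdsWithin_le_nhds hN, nhdsWithin_le_nhds hqv, eventually_exists_rot_eq hu hα]
    with v hNv hqv' ⟨β, hβ, hβv⟩
  subst hβv
  rcases eq_or_ne β 0 with rfl | hβ0
  · rw [rot_zero, union_self, hw.Tbar_Hminus_eq hu hq]
  · exact c.Tbar_union_subset_of_not_rule_farOpen hNv hqv' (hrot β hβ0 hβ)

lemma IsSpeed.image_union_subset_Tbar (hw : IsSpeed c w) {u v q : Pt} (hu : ‖u‖ = 1)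
    (hv : ‖v‖ = 1) (hqu : ⟪q, u⟫ = -w u) (hqv : ⟪q, v⟫ = -w v) :
    (fun x => x - q) '' (Hminus u ∪ Hminus v) ⊆ c.Tbar (Hminus u ∪ Hminus v) := by
  rw [image_union, ← hw.Tbar_Hminus_eq hu hqu, ← hw.Tbar_Hminus_eq hv hqv]
  exact union_subset (c.Tbar_mono subset_union_left) (c.Tbar_mono subset_union_right)

lemma exists_pos_of_eventually_nhdsWithin_sphere {u : Pt} {P : Pt → Prop}
    (h : ∀ᶠ v in 𝓝[Metric.sphere 0 1] u, P v) :
    ∃ ε : ℝ, 0 < ε ∧ ∀ v : Pt, ‖v‖ = 1 → ‖v - u‖ < ε → P v := by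
  obtain ⟨ε, hε, hball⟩ := Metric.mem_nhdsWithin_iff.1 h
  exact ⟨ε, hε, fun v hv hvu => hball ⟨by rwa [Metric.mem_ball, dist_eq_norm], by simpa using hv⟩⟩

end Wedge

section LocallyFlat

variable {c : CA} {w : Pt → ℝ}

lemma smul_mem_Kset_iff {v : Pt} (hv : ‖v‖ = 1) {r : ℝ} (hr : 0 < r) :
    r • v ∈ Kset w ↔ r ≤ (w v)⁻¹ := by
  refine ⟨?_, fun h => ⟨v, hv, r, hr.le, h, rfl⟩⟩
  rintro ⟨v', hv', r', hr', hle, heq⟩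
  obtain rfl : r' = r := by
    simpa [norm_smul, hv, hv', abs_of_nonneg hr', abs_of_pos hr] using congrArg norm heq.symm
  rwa [smul_right_injective Pt hr.ne' heq]

lemma inv_smul_mem_frontier_Kset {v : Pt} (hv : ‖v‖ = 1) (hwv : 0 < w v) :
    (w v)⁻¹ • v ∈ frontier (Kset w) := by
  refine ⟨subset_closure ((smul_mem_Kset_iff hv (inv_pos.2 hwv)).2 le_rfl), fun hint => ?_⟩
  obtain ⟨ε, hε, hball⟩ := Metric.mem_nhds_iff.1 (mem_interior_iff_mem_nhds.1 hint)
  have hmem : ((w v)⁻¹ + ε / 2) • v ∈ Kset w := hball (by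
    rw [Metric.mem_ball, dist_eq_norm, add_smul, add_sub_cancel_left, norm_smul, hv, mul_one,
      norm_eq_abs, abs_of_pos (half_pos hε)]
    exact half_lt_self hε)
  linarith [(smul_mem_Kset_iff hv (by positivity)).1 hmem]

lemma IsSpeed.eventually_mem_lineSet (hw : IsSpeed c w) (hsc : Supercritical w) {u : Pt}
    (hu : ‖u‖ = 1) {δ : ℝ} (hδ : 0 < δ) {n : Pt}
    (hline : frontier (Kset w) ∩ Metric.ball ((w u)⁻¹ • u) δ =
      lineSet ((w u)⁻¹ • u) n ∩ Metric.ball ((w u)⁻¹ • u) δ) :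
    ∀ᶠ v in 𝓝[Metric.sphere 0 1] u, (w v)⁻¹ • v ∈ lineSet ((w u)⁻¹ • u) n := by
  have hlim : Tendsto (fun v => (w v)⁻¹ • v) (𝓝[Metric.sphere 0 1] u) (𝓝 ((w u)⁻¹ • u)) :=
    ((hw.continuousOn u (by simpa using hu)).inv₀ (hsc u hu).ne').smul continuousWithinAt_id
  filter_upwards [hlim (Metric.ball_mem_nhds _ hδ), self_mem_nhdsWithin] with v hvδ hv
  have hv1 : ‖v‖ = 1 := by simpa using hv
  have hmem : (w v)⁻¹ • v ∈ frontier (Kset w) ∩ Metric.ball ((w u)⁻¹ • u) δ :=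
    ⟨inv_smul_mem_frontier_Kset hv1 (hsc v hv1), hvδ⟩
  exact (hline ▸ hmem).1

lemma exists_eventually_speed_eq_neg_inner (hsc : Supercritical w) {u : Pt} (hu : ‖u‖ = 1)
    {n : Pt} (hn : n ≠ 0)
    (h : ∀ᶠ v in 𝓝[Metric.sphere 0 1] u, (w v)⁻¹ • v ∈ lineSet ((w u)⁻¹ • u) n) :
    ∃ q : Pt, ∀ᶠ v in 𝓝[Metric.sphere 0 1] u, w v = -⟪q, v⟫ := by
  set k := ⟪n, u⟫ / w u
  have hk : ∀ᶠ v in 𝓝[Metric.sphere 0 1] u, ⟪n, v⟫ = k * w v := by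
    filter_upwards [h, self_mem_nhdsWithin] with v hv hv1
    have hwv := hsc v (by simpa using hv1)
    have hwu := hsc u hu
    simp only [lineSet, mem_ofPred_eq, inner_sub_left, real_inner_smul_left] at hv
    rw [real_inner_comm n v, real_inner_comm n u] at hv
    rw [div_mul_eq_mul_div, eq_div_iff hwu.ne']
    field_simp at hv
    linarith
  have hk0 : k ≠ 0 := by
    intro hk0
    refine hn (mem_singleton_iff.1 (zero_mem_of_eventually_exists_inner_eq_zero hu
      (finite_singleton n) (hk.mono fun v hv => ⟨n, rfl, by rw [hv, hk0, zero_mul]⟩))).symm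
  exact ⟨-k⁻¹ • n, hk.mono fun v hv => by rw [real_inner_smul_left, hv]; field_simp⟩

lemma IsSpeed.mem_N_of_eventually_speed_eq (hw : IsSpeed c w) {u q : Pt} (hu : ‖u‖ = 1)
    (h : ∀ᶠ v in 𝓝[Metric.sphere 0 1] u, w v = -⟪q, v⟫) : q ∈ c.N := by
  have hS : ∀ᶠ v in 𝓝[Metric.sphere 0 1] u, ∃ z ∈ (· - q) '' c.N, ⟪z, v⟫ = 0 := by
    filter_upwards [h, self_mem_nhdsWithin] with v hv hv1
    obtain ⟨y, hy, hyv⟩ := hw.exists_mem_inner_eq (by simpa using hv1)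
    exact ⟨y - q, mem_image_of_mem _ hy, by rw [inner_sub_left, hyv, hv]; ring⟩
  obtain ⟨y, hy, hyq⟩ := zero_mem_of_eventually_exists_inner_eq_zero hu (c.finite.image _) hS
  rwa [← sub_eq_zero.1 hyq]

lemma IsSpeed.exists_not_rule_farOpen_rot (hw : IsSpeed c w) (hsc : Supercritical w) {u q : Pt}
    (hu : ‖u‖ = 1) (h : ∀ᶠ v in 𝓝[Metric.sphere 0 1] u, w v = -⟪q, v⟫) :
    ∃ α : ℝ, 0 < α ∧ ∀ β : ℝ, β ≠ 0 → |β| < α → ¬ c.rule (farOpen c.N q (rot β u)) := by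
  obtain ⟨α, hα, hrot⟩ := Metric.eventually_nhds_iff.1 ((tendsto_rot_nhds_zero hu).eventually h)
  refine ⟨α, hα, fun β _ hβ => ?_⟩
  have hv : ‖rot β u‖ = 1 := (norm_rot β u).trans hu
  have hq := hrot (show dist β 0 < α by rwa [Real.dist_0_eq_abs])
  exact hw.not_rule_farOpen hv (by linarith) (hsc _ hv)

end LocallyFlat

theorem stmt13 (c : CA) (w : Pt → ℝ) (hw : IsSpeed c w) (hsc : Supercritical w)
    (u : Pt) (hu : ‖u‖ = 1) (xu : Pt) (hxu : xu ∈ lineu w u ∩ c.N)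
    (α : ℝ) (hα : 0 < α)
    (hrot : ∀ β : ℝ, β ≠ 0 → |β| < α → ¬ c.rule (farOpen c.N xu (rot β u))) :
    (∃ βb : ℝ, 0 < βb ∧ ∀ v : Pt, ‖v‖ = 1 → ‖v - u‖ < βb →
        c.Tbar (Hminus u ∪ Hminus v) ⊆ (fun x => x - xu) '' (Hminus u ∪ Hminus v)) ∧
    ((∃ δ : ℝ, 0 < δ ∧ ∃ n : Pt, n ≠ 0 ∧
        frontier (Kset w) ∩ Metric.ball ((w u)⁻¹ • u) δ =
          lineSet ((w u)⁻¹ • u) n ∩ Metric.ball ((w u)⁻¹ • u) δ) →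
      (∀ x' : Pt, x' ∈ lineu w u ∩ c.N →
        (∃ α' : ℝ, 0 < α' ∧ ∀ β : ℝ, β ≠ 0 → |β| < α' →
          ¬ c.rule (farOpen c.N x' (rot β u))) → x' = xu) →
      ∃ βb : ℝ, 0 < βb ∧ ∀ v : Pt, ‖v‖ = 1 → ‖v - u‖ < βb →
        c.Tbar (Hminus u ∪ Hminus v) = (fun x => x - xu) '' (Hminus u ∪ Hminus v)) := by
  have hsub := eventually_Tbar_union_subset hw hsc hu hxu.1 hα hrot
  refine ⟨exists_pos_of_eventually_nhdsWithin_sphere hsub, ?_⟩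
  rintro ⟨δ, hδ, n, hn, hline⟩ huniq
  obtain ⟨q, hq⟩ :=
    exists_eventually_speed_eq_neg_inner hsc hu hn (hw.eventually_mem_lineSet hsc hu hδ hline)
  have hqu : ⟪q, u⟫ = -w u := by linarith [hq.self_of_nhdsWithin (by simpa using hu)]
  obtain rfl : q = xu :=
    huniq q ⟨hqu, hw.mem_N_of_eventually_speed_eq hu hq⟩ (hw.exists_not_rule_farOpen_rot hsc hu hq)
  refine exists_pos_of_eventually_nhdsWithin_sphere ?_
  filter_upwards [hsub, hq, self_mem_nhdsWithin] with v hsubv hqv hv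
  exact hsubv.antisymm (hw.image_union_subset_Tbar hu (by simpa using hv) hqu (by linarith))
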